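/- (Remark 3.2) Let d ≥ 1, r > 0, θ ∈ S^{d-1}, and define S_{r,θ} := {z ∈ B_r ∩ ℤ^d : z + sθ ∉ B_r ∩ ℤ^d for all s > 0}. Let W : ℤ^d → ℂ \ {0} satisfy W(y) = 1 for all y ∉ B_r ∩ ℤ^d. Then there exist w_1, w_2 : ℤ^d → ℂ \ {0} with w_1(z) = w_2(z) = 1 for all z ∉ B_r ∩ ℤ^d and w_2(z) = 1 for all z ∈ (B_r ∩ ℤ^d) \ S_{r,θ}, such that for every y ∈ ℤ^d: W(y) = w_2(y) · ∏_{ζ} w_1(ζ), where the (finite) product is over all ζ ∈ ℤ^d of the form ζ = y + sθ with s > 0. -/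

import Mathlib

/-!
The reals `t` with `t • θ ∈ ℤ^d` form a subgroup of `ℝ` (`latticeSteps`), discrete because nonzero
lattice points have norm at least `1`. So either no lattice point lies on an open ray in direction
`θ`, or there is a lattice vector `e = α • θ` with `α > 0` minimal, and the lattice points on the
open ray from `y` are exactly the `y + (n + 1) • e`.

In the second case let `V z = W z` if `z + e ∈ B := B_r ∩ ℤ^d` and `V z = 1` otherwise
(`innerWeight`), and take `w₁ z = V (z - e) / V z` (`transferWeight`) and `w₂ = W / V`
(`boundaryWeight`). The product of `w₁` along the ray from `y` telescopes to `V y`, because `B` is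
finite and `V = 1` off `B`. Moreover `w₂ z = 1` as soon as `z + e ∈ B`, which by convexity of the
ball holds for every `z ∈ B` whose ray meets `B`.
-/

noncomputable section

def emb {d : ℕ} (z : Fin d → ℤ) : EuclideanSpace ℝ (Fin d) := WithLp.toLp 2 (fun i => (z i : ℝ))

open Function Set

theorem finprod_div_succ_eq {G₀ : Type*} [CommGroupWithZero G₀] {f : ℕ → G₀}
    (hf : ∀ n, f n ≠ 0) (hfin : (mulSupport f).Finite) :
    ∏ᶠ n, f n / f (n + 1) = f 0 := by
  obtain ⟨N, hN⟩ := hfin.bddAbove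
  have hone : ∀ n, N < n → f n = 1 := fun n hn => by_contra fun h => hn.not_ge (hN h)
  have hsupp : mulSupport (fun n => f n / f (n + 1)) ⊆ Finset.range (N + 1) := by
    intro n hn
    by_contra h
    simp only [Finset.coe_range, mem_Iio, not_lt] at h
    exact hn (by simp only [hone n (by omega), hone (n + 1) (by omega), div_one])
  rw [finprod_eq_prod_of_mulSupport_subset _ hsupp,
    Finset.prod_range_induction _ (fun n => f 0 / f n) (div_self (hf 0)) _
      fun n _ => (div_mul_div_cancel₀ (hf n)).symm,
    hone (N + 1) N.lt_succ_self, div_one]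

section Weights

variable {Γ G₀ : Type*} [AddCommGroup Γ] [CommGroupWithZero G₀] (B : Set Γ) (e : Γ) (W : Γ → G₀)

open scoped Classical in
def innerWeight (z : Γ) : G₀ := if z + e ∈ B then W z else 1

def transferWeight (z : Γ) : G₀ := innerWeight B e W (z - e) / innerWeight B e W z

def boundaryWeight (z : Γ) : G₀ := W z / innerWeight B e W z

variable {B e W}

theorem innerWeight_ne_zero (hW : ∀ z, W z ≠ 0) (z : Γ) : innerWeight B e W z ≠ 0 := by
  unfold innerWeight; split_ifs
  exacts [hW z, one_ne_zero]

theorem innerWeight_eq_one (hWB : ∀ z ∉ B, W z = 1) {z : Γ} (hz : z ∉ B ∨ z + e ∉ B) :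
    innerWeight B e W z = 1 := by
  unfold innerWeight; split_ifs with h
  · exact hWB z (hz.resolve_right (not_not.2 h))
  · rfl

theorem transferWeight_ne_zero (hW : ∀ z, W z ≠ 0) (z : Γ) : transferWeight B e W z ≠ 0 :=
  div_ne_zero (innerWeight_ne_zero hW _) (innerWeight_ne_zero hW _)

theorem boundaryWeight_ne_zero (hW : ∀ z, W z ≠ 0) (z : Γ) : boundaryWeight B e W z ≠ 0 :=
  div_ne_zero (hW z) (innerWeight_ne_zero hW _)

theorem transferWeight_eq_one (hWB : ∀ z ∉ B, W z = 1) {z : Γ} (hz : z ∉ B) :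
    transferWeight B e W z = 1 := by
  rw [transferWeight, innerWeight_eq_one hWB (.inr (by rwa [sub_add_cancel])),
    innerWeight_eq_one hWB (.inl hz), div_one]

theorem boundaryWeight_eq_one (hWB : ∀ z ∉ B, W z = 1) {z : Γ} (hz : z ∉ B) :
    boundaryWeight B e W z = 1 := by
  rw [boundaryWeight, innerWeight_eq_one hWB (.inl hz), hWB z hz, div_one]

theorem boundaryWeight_eq_one_of_add_mem (hW : ∀ z, W z ≠ 0) {z : Γ} (hz : z + e ∈ B) :
    boundaryWeight B e W z = 1 := by
  rw [boundaryWeight, innerWeight, if_pos hz, div_self (hW z)]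

theorem boundaryWeight_mul_innerWeight (hW : ∀ z, W z ≠ 0) (z : Γ) :
    boundaryWeight B e W z * innerWeight B e W z = W z :=
  div_mul_cancel₀ _ (innerWeight_ne_zero hW z)

theorem finprod_transferWeight [IsAddTorsionFree Γ] (hW : ∀ z, W z ≠ 0)
    (hWB : ∀ z ∉ B, W z = 1) (hB : B.Finite) (he : e ≠ 0) (y : Γ) :
    ∏ᶠ ζ ∈ range fun n : ℕ => y + (n + 1) • e, transferWeight B e W ζ = innerWeight B e W y := by
  have hinj : Injective fun n : ℕ => y + n • e :=
    (add_right_injective y).comp <| injective_nsmul_iff_not_isOfFinAddOrder.2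
      ((isOfFinAddOrder_iff_eq_zero e).not.2 he)
  rw [finprod_mem_range (g := fun n : ℕ => y + (n + 1) • e) (hinj.comp (add_left_injective 1))]
  have hfin : (mulSupport fun n : ℕ => innerWeight B e W (y + n • e)).Finite :=
    (hB.preimage hinj.injOn).subset fun n hn => by
      by_contra h; exact hn (innerWeight_eq_one hWB (.inl h))
  convert finprod_div_succ_eq (fun n => innerWeight_ne_zero hW (y + n • e)) hfin using 2 with n
  · simp only [transferWeight, succ_nsmul, ← add_assoc, add_sub_cancel_right]
  · rw [zero_smul, add_zero]

end Weights

section Lattice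

variable {d : ℕ}

theorem emb_zero : emb (0 : Fin d → ℤ) = 0 := by ext; simp [emb]

theorem emb_add (a b : Fin d → ℤ) : emb (a + b) = emb a + emb b := by ext; simp [emb]

theorem emb_neg (a : Fin d → ℤ) : emb (-a) = -emb a := by ext; simp [emb]

theorem emb_sub (a b : Fin d → ℤ) : emb (a - b) = emb a - emb b := by ext; simp [emb]

theorem emb_nsmul (k : ℕ) (a : Fin d → ℤ) : emb (k • a) = k • emb a := by ext; simp [emb]

theorem emb_injective : Injective (emb (d := d)) := fun a b h => by
  funext i
  have := congrArg (· i) h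
  simpa [emb] using this

theorem abs_le_norm_emb (z : Fin d → ℤ) (i : Fin d) : |(z i : ℝ)| ≤ ‖emb z‖ :=
  PiLp.norm_apply_le (emb z) i

theorem one_le_norm_emb {z : Fin d → ℤ} (hz : z ≠ 0) : 1 ≤ ‖emb z‖ := by
  obtain ⟨i, hi⟩ := Function.ne_iff.1 hz
  exact le_trans (by exact_mod_cast Int.one_le_abs hi) (abs_le_norm_emb z i)

theorem finite_setOf_norm_emb_le (r : ℝ) : {z : Fin d → ℤ | ‖emb z‖ ≤ r}.Finite :=
  (Set.finite_Icc (-fun _ => ⌈r⌉) fun _ => ⌈r⌉).subset fun z hz => by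
    have h i : |z i| ≤ ⌈r⌉ := Int.cast_le.1 <| (Int.cast_abs (R := ℝ) ▸ abs_le_norm_emb z i).trans
      (hz.trans (Int.le_ceil r))
    exact ⟨fun i => (abs_le.1 (h i)).1, fun i => (abs_le.1 (h i)).2⟩

theorem norm_emb_add_le_of_norm_emb_add_nsmul_le {r : ℝ} {y e : Fin d → ℤ} {n : ℕ}
    (hy : ‖emb y‖ ≤ r) (hn : ‖emb (y + (n + 1) • e)‖ ≤ r) : ‖emb (y + e)‖ ≤ r := by
  rw [← mem_closedBall_zero_iff] at hy hn ⊢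
  rw [emb_add, emb_nsmul, ← Nat.cast_smul_eq_nsmul ℝ] at hn
  have key := (convex_closedBall (0 : EuclideanSpace ℝ (Fin d)) r).add_smul_mem hy hn
    (t := ((n + 1 : ℕ) : ℝ)⁻¹) ⟨by positivity, inv_le_one_of_one_le₀ (by simp)⟩
  rwa [smul_smul, inv_mul_cancel₀ (by positivity), one_smul, ← emb_add] at key

def latticeRay (θ : EuclideanSpace ℝ (Fin d)) (y : Fin d → ℤ) : Set (Fin d → ℤ) :=
  {ζ | ∃ s : ℝ, 0 < s ∧ emb ζ = emb y + s • θ}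

def latticeSteps (θ : EuclideanSpace ℝ (Fin d)) : AddSubgroup ℝ where
  carrier := {t | ∃ z : Fin d → ℤ, emb z = t • θ}
  zero_mem' := ⟨0, by rw [emb_zero, zero_smul]⟩
  add_mem' := fun ⟨a, ha⟩ ⟨b, hb⟩ => ⟨a + b, by rw [emb_add, ha, hb, add_smul]⟩
  neg_mem' := fun ⟨a, ha⟩ => ⟨-a, by rw [emb_neg, ha, neg_smul]⟩

theorem mem_latticeRay_iff {θ : EuclideanSpace ℝ (Fin d)} {y ζ : Fin d → ℤ} :
    ζ ∈ latticeRay θ y ↔ ∃ s : ℝ, 0 < s ∧ emb (ζ - y) = s • θ := by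
  simp only [latticeRay, mem_ofPred_eq, emb_sub, sub_eq_iff_eq_add']

theorem disjoint_latticeSteps_Ioo {θ : EuclideanSpace ℝ (Fin d)} (hθ : θ ≠ 0) :
    Disjoint (latticeSteps θ : Set ℝ) (Ioo 0 ‖θ‖⁻¹) := by
  rw [Set.disjoint_left]
  rintro t ⟨z, hz⟩ ⟨ht, htθ⟩
  have hz0 : z ≠ 0 := by
    rintro rfl
    rw [emb_zero, eq_comm, smul_eq_zero] at hz
    exact hz.elim ht.ne' hθ
  have := one_le_norm_emb hz0
  rw [hz, norm_smul, Real.norm_of_nonneg ht.le] at this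
  have := mul_lt_mul_of_pos_right htθ (norm_pos_iff.2 hθ)
  rw [inv_mul_cancel₀ (norm_ne_zero_iff.2 hθ)] at this
  linarith

theorem latticeRay_eq_empty {θ : EuclideanSpace ℝ (Fin d)} (hbot : latticeSteps θ = ⊥)
    (y : Fin d → ℤ) : latticeRay θ y = ∅ := by
  refine eq_empty_of_forall_notMem fun ζ hζ => ?_
  obtain ⟨s, hs, hζ⟩ := mem_latticeRay_iff.1 hζ
  have : s ∈ latticeSteps θ := ⟨_, hζ⟩
  rw [hbot, AddSubgroup.mem_bot] at this
  exact hs.ne' this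

theorem latticeRay_eq_range {θ : EuclideanSpace ℝ (Fin d)} {α : ℝ}
    (hα : IsLeast {t | t ∈ latticeSteps θ ∧ 0 < t} α) {e : Fin d → ℤ} (he : emb e = α • θ)
    (y : Fin d → ℤ) : latticeRay θ y = range fun n : ℕ => y + (n + 1) • e := by
  have hcyc := AddSubgroup.cyclic_of_min hα
  have hα0 := hα.1.2
  ext ζ
  rw [mem_latticeRay_iff, mem_range]
  constructor
  · rintro ⟨s, hs, hζ⟩
    have hsG : s ∈ latticeSteps θ := ⟨_, hζ⟩
    obtain ⟨k, rfl⟩ := AddSubgroup.mem_closure_singleton.1 (hcyc ▸ hsG)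
    obtain ⟨n, rfl⟩ : ∃ n : ℕ, k = n + 1 := by
      rw [zsmul_eq_mul] at hs
      have hk : (0 : ℝ) < k := pos_of_mul_pos_left hs hα0.le
      exact ⟨(k - 1).toNat, by have : 0 < k := Int.cast_pos.1 hk; omega⟩
    have : emb ((n + 1) • e) = emb (ζ - y) := by
      rw [hζ, emb_nsmul, he, ← Nat.cast_smul_eq_nsmul ℝ, smul_smul, zsmul_eq_mul]
      push_cast; rfl
    exact ⟨n, by rw [emb_injective this, add_sub_cancel]⟩
  · rintro ⟨n, rfl⟩
    refine ⟨(n + 1) * α, by positivity, ?_⟩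
    rw [add_sub_cancel_left, emb_nsmul, he, ← Nat.cast_smul_eq_nsmul ℝ, smul_smul]
    push_cast; rfl

theorem latticeRay_eq_empty_or_eq_range {θ : EuclideanSpace ℝ (Fin d)} (hθ : θ ≠ 0) :
    (∀ y, latticeRay θ y = ∅) ∨
      ∃ e : Fin d → ℤ, e ≠ 0 ∧ ∀ y, latticeRay θ y = range fun n : ℕ => y + (n + 1) • e := by
  rcases eq_or_ne (latticeSteps θ) ⊥ with hbot | hbot
  · exact .inl (latticeRay_eq_empty hbot)
  obtain ⟨α, hα⟩ := AddSubgroup.exists_isLeast_pos hbot (inv_pos.2 (norm_pos_iff.2 hθ))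
    (disjoint_latticeSteps_Ioo hθ)
  obtain ⟨e, he⟩ := hα.1.1
  refine .inr ⟨e, fun h => ?_, latticeRay_eq_range hα he⟩
  rw [h, emb_zero, eq_comm, smul_eq_zero] at he
  exact he.elim hα.1.2.ne' hθ

end Lattice

theorem stmt11_general (d : ℕ) (r : ℝ)
    (θ : EuclideanSpace ℝ (Fin d)) (hθ : ‖θ‖ = 1)
    (W : (Fin d → ℤ) → ℂ) (hW : ∀ y, W y ≠ 0)
    (hWs : ∀ y : Fin d → ℤ, ¬ ‖emb y‖ ≤ r → W y = 1) :
    ∃ w1 w2 : (Fin d → ℤ) → ℂ,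
      (∀ z, w1 z ≠ 0) ∧ (∀ z, w2 z ≠ 0) ∧
      (∀ z : Fin d → ℤ, ¬ ‖emb z‖ ≤ r → w1 z = 1) ∧
      (∀ z : Fin d → ℤ, ¬ ‖emb z‖ ≤ r → w2 z = 1) ∧
      (∀ z : Fin d → ℤ, ‖emb z‖ ≤ r →
        ¬ (∀ s : ℝ, 0 < s → ¬ ∃ ζ : Fin d → ℤ, emb ζ = emb z + s • θ ∧ ‖emb ζ‖ ≤ r) →
        w2 z = 1) ∧
      (∀ y : Fin d → ℤ,
        W y = w2 y * ∏ᶠ ζ ∈ {ζ : Fin d → ℤ | ∃ s : ℝ, 0 < s ∧ emb ζ = emb y + s • θ}, w1 ζ) := by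
  have hθ0 : θ ≠ 0 := norm_ne_zero_iff.1 (by rw [hθ]; exact one_ne_zero)
  rcases latticeRay_eq_empty_or_eq_range hθ0 with hempty | ⟨e, he, hray⟩
  · refine ⟨1, W, fun _ => one_ne_zero, hW, fun _ _ => rfl, hWs, fun z _ hS => ?_, fun y => ?_⟩
    · push Not at hS
      obtain ⟨s, hs, ζ, hζ, -⟩ := hS
      exact ((hempty z).subset ⟨s, hs, hζ⟩).elim
    · change W y = W y * ∏ᶠ ζ ∈ latticeRay θ y, 1
      rw [hempty y, finprod_mem_empty, mul_one]
  set B := {z : Fin d → ℤ | ‖emb z‖ ≤ r}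
  have hWB : ∀ z ∉ B, W z = 1 := hWs
  refine ⟨transferWeight B e W, boundaryWeight B e W, transferWeight_ne_zero hW,
    boundaryWeight_ne_zero hW, fun _ => transferWeight_eq_one hWB,
    fun _ => boundaryWeight_eq_one hWB, fun z hz hS => ?_, fun y => ?_⟩
  · push Not at hS
    obtain ⟨s, hs, ζ, hζ, hζB⟩ := hS
    obtain ⟨n, rfl⟩ : ζ ∈ range fun n : ℕ => z + (n + 1) • e := hray z ▸ ⟨s, hs, hζ⟩
    exact boundaryWeight_eq_one_of_add_mem hW (norm_emb_add_le_of_norm_emb_add_nsmul_le hz hζB)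
  · change W y = _ * ∏ᶠ ζ ∈ latticeRay θ y, _
    rw [hray y, finprod_transferWeight hW hWB (finite_setOf_norm_emb_le r) he,
      boundaryWeight_mul_innerWeight hW]

/-- Remark 3.2: any nonvanishing weight W equal to 1 outside B_r ∩ ℤ^d
admits the presentation W(y) = w₂(y) ∏_{ζ = y + sθ, s > 0} w₁(ζ) with nonvanishing
w₁, w₂ equal to 1 outside B_r ∩ ℤ^d and w₂ ≡ 1 on (B_r ∩ ℤ^d) \ S_{r,θ}, where
S_{r,θ} = {z ∈ B_r ∩ ℤ^d : z + sθ ∉ B_r ∩ ℤ^d for all s > 0}. -/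
theorem stmt11 (d : ℕ) (hd : 1 ≤ d) (r : ℝ) (hr : 0 < r)
    (θ : EuclideanSpace ℝ (Fin d)) (hθ : ‖θ‖ = 1)
    (W : (Fin d → ℤ) → ℂ) (hW : ∀ y, W y ≠ 0)
    (hWs : ∀ y : Fin d → ℤ, ¬ ‖emb y‖ ≤ r → W y = 1) :
    ∃ w1 w2 : (Fin d → ℤ) → ℂ,
      (∀ z, w1 z ≠ 0) ∧ (∀ z, w2 z ≠ 0) ∧
      (∀ z : Fin d → ℤ, ¬ ‖emb z‖ ≤ r → w1 z = 1) ∧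
      (∀ z : Fin d → ℤ, ¬ ‖emb z‖ ≤ r → w2 z = 1) ∧
      (∀ z : Fin d → ℤ, ‖emb z‖ ≤ r →
        ¬ (∀ s : ℝ, 0 < s → ¬ ∃ ζ : Fin d → ℤ, emb ζ = emb z + s • θ ∧ ‖emb ζ‖ ≤ r) →
        w2 z = 1) ∧
      (∀ y : Fin d → ℤ,
        W y = w2 y * ∏ᶠ ζ ∈ {ζ : Fin d → ℤ | ∃ s : ℝ, 0 < s ∧ emb ζ = emb y + s • θ}, w1 ζ) :=
  stmt11_general d r θ hθ W hW hWs
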